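/- arXiv:2109.13313 — 2 statements merged into one kernel-verified Lean document; each statement's English description precedes it below -/
import Mathlib

section
/- Suppose A : ℝⁿˣᵐ is differentiable in a parameter t and admits a differentiable QR decomposition A(t) = Q(t) R(t) with Qᵀ Q = I and R upper-triangular and invertible. Then at any point where R(t) = I, the derivative of R satisfies R' = Qᵀ A' − Qᵀ Q', where Qᵀ Q' is skew-symmetric and R' is upper triangular; hence the diagonal entries satisfy (R')ᵢᵢ = (Qᵀ A')ᵢᵢ and for i < j, (R')ᵢⱼ = (Qᵀ A')ᵢⱼ + (Qᵀ A')ⱼᵢ. -/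
/-!
Differentiating `A = Q R`, `Qᵀ Q = 1` and the vanishing of the subdiagonal entries of `R`
shows that at a point where `R = 1` we have `R' = Qᵀ A' - Qᵀ Q'`, with `Qᵀ Q'` skew-symmetric and
`R'` upper triangular. Writing `R' = S + K` with `S = Qᵀ A'` and `K = -Qᵀ Q'` skew, the diagonal of
`K` vanishes, and below the diagonal `0 = S j i + K j i` forces `K i j = S j i` above it.
-/

open Matrix

namespace Matrix

variable {𝕜 : Type*} [NontriviallyNormedField 𝕜] {l m n : Type*}

def HasEntrywiseDerivAt (M : 𝕜 → Matrix m n 𝕜) (M' : Matrix m n 𝕜) (t : 𝕜) : Prop :=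
  ∀ i j, HasDerivAt (fun s => M s i j) (M' i j) t

theorem hasEntrywiseDerivAt_const (c : Matrix m n 𝕜) (t : 𝕜) :
    HasEntrywiseDerivAt (fun _ => c) 0 t :=
  fun _ _ => hasDerivAt_const t _

namespace HasEntrywiseDerivAt

variable {M : 𝕜 → Matrix m n 𝕜} {M' N' : Matrix m n 𝕜} {t : 𝕜}

theorem unique (hM : HasEntrywiseDerivAt M M' t) (hN : HasEntrywiseDerivAt M N' t) :
    M' = N' :=
  ext fun i j => (hM i j).unique (hN i j)

theorem transpose (hM : HasEntrywiseDerivAt M M' t) :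
    HasEntrywiseDerivAt (fun s => (M s)ᵀ) M'ᵀ t :=
  fun i j => hM j i

theorem mul [Fintype m] {M : 𝕜 → Matrix l m 𝕜} {M' : Matrix l m 𝕜} {N : 𝕜 → Matrix m n 𝕜}
    (hM : HasEntrywiseDerivAt M M' t) (hN : HasEntrywiseDerivAt N N' t) :
    HasEntrywiseDerivAt (fun s => M s * N s) (M' * N t + M t * N') t := by
  intro i j
  simp only [add_apply, mul_apply, ← Finset.sum_add_distrib]
  exact HasDerivAt.fun_sum fun k _ => (hM i k).mul (hN k j)

theorem blockTriangular {α : Type*} [LT α] {b : m → α} {R : 𝕜 → Matrix m m 𝕜}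
    {R' : Matrix m m 𝕜} (hR : HasEntrywiseDerivAt R R' t)
    (h : ∀ s, (R s).BlockTriangular b) : R'.BlockTriangular b := fun i j hij =>
  (hR i j).unique (by simpa only [h _ hij] using hasDerivAt_const t (0 : 𝕜))

theorem transpose_mul_skew [Fintype m] [DecidableEq n] {Q : 𝕜 → Matrix m n 𝕜}
    {Q' : Matrix m n 𝕜} (hQ : HasEntrywiseDerivAt Q Q' t) (horth : ∀ s, (Q s)ᵀ * Q s = 1) :
    ((Q t)ᵀ * Q')ᵀ = -((Q t)ᵀ * Q') := by
  have hsum : Q'ᵀ * Q t + (Q t)ᵀ * Q' = 0 :=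
    (hQ.transpose.mul hQ).unique <| by
      simpa only [horth] using hasEntrywiseDerivAt_const (1 : Matrix n n 𝕜) t
  rw [transpose_mul, transpose_transpose]
  exact eq_neg_of_add_eq_zero_left hsum

end HasEntrywiseDerivAt

variable {R : Type*} [AddGroup R] {U S K : Matrix m m R}

theorem apply_self_eq_of_eq_add_skew [IsAddTorsionFree R] (h : U = S + K) (hK : Kᵀ = -K)
    (i : m) : U i i = S i i := by
  have hKii : K i i = 0 := self_eq_neg.mp (congrFun (congrFun hK i) i)
  rw [h, add_apply, hKii, add_zero]

theorem IsUpperTriangular.apply_eq_add_apply_of_eq_add_skew [LT m] (hU : U.IsUpperTriangular)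
    (h : U = S + K) (hK : Kᵀ = -K) {i j : m} (hij : i < j) : U i j = S i j + S j i := by
  have hlow : S j i + K j i = 0 := by simpa only [h, add_apply] using hU hij
  have hKji : K j i = -K i j := by
    simpa only [transpose_apply, neg_apply] using congrFun (congrFun hK i) j
  have hKij : K i j = S j i := (add_neg_eq_zero.mp (hKji ▸ hlow)).symm
  rw [h, add_apply, hKij]

end Matrix

theorem stmt1_general (n m : ℕ) (A A' Q Q' : ℝ → Matrix (Fin n) (Fin m) ℝ)
    (R R' : ℝ → Matrix (Fin m) (Fin m) ℝ)
    (hA : ∀ i j t, HasDerivAt (fun s => A s i j) (A' t i j) t)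
    (hQ : ∀ i j t, HasDerivAt (fun s => Q s i j) (Q' t i j) t)
    (hR : ∀ i j t, HasDerivAt (fun s => R s i j) (R' t i j) t)
    (hQR : ∀ t, A t = Q t * R t)
    (horth : ∀ t, (Q t)ᵀ * Q t = 1)
    (hupper : ∀ t i j, j < i → R t i j = 0)
    (t₀ : ℝ) (hR0 : R t₀ = 1) :
    R' t₀ = (Q t₀)ᵀ * A' t₀ - (Q t₀)ᵀ * Q' t₀ ∧
    ((Q t₀)ᵀ * Q' t₀)ᵀ = -((Q t₀)ᵀ * Q' t₀) ∧
    (∀ i j : Fin m, j < i → R' t₀ i j = 0) ∧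
    (∀ i : Fin m, R' t₀ i i = ((Q t₀)ᵀ * A' t₀) i i) ∧
    (∀ i j : Fin m, i < j →
      R' t₀ i j = ((Q t₀)ᵀ * A' t₀) i j + ((Q t₀)ᵀ * A' t₀) j i) := by
  have hQ₀ : HasEntrywiseDerivAt Q (Q' t₀) t₀ := (hQ · · t₀)
  have hA₀ : A' t₀ = Q' t₀ + Q t₀ * R' t₀ := by
    have hprod : HasEntrywiseDerivAt A (Q' t₀ * R t₀ + Q t₀ * R' t₀) t₀ := by
      simpa only [← hQR] using hQ₀.mul (hR · · t₀)
    rw [HasEntrywiseDerivAt.unique (hA · · t₀) hprod, hR0, Matrix.mul_one]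
  have hR' : R' t₀ = (Q t₀)ᵀ * A' t₀ - (Q t₀)ᵀ * Q' t₀ := by
    rw [hA₀, Matrix.mul_add, ← Matrix.mul_assoc, horth, Matrix.one_mul, add_sub_cancel_left]
  have hskew := hQ₀.transpose_mul_skew horth
  have hupper' : (R' t₀).IsUpperTriangular :=
    HasEntrywiseDerivAt.blockTriangular (hR · · t₀) fun s _ _ => hupper s _ _
  have hsplit : R' t₀ = (Q t₀)ᵀ * A' t₀ + -((Q t₀)ᵀ * Q' t₀) := by
    rw [hR', sub_eq_add_neg]
  have hskew' : (-((Q t₀)ᵀ * Q' t₀))ᵀ = -(-((Q t₀)ᵀ * Q' t₀)) := by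
    rw [transpose_neg, hskew]
  exact ⟨hR', hskew, fun _ _ hij => hupper' hij, apply_self_eq_of_eq_add_skew hsplit hskew',
    fun _ _ => hupper'.apply_eq_add_apply_of_eq_add_skew hsplit hskew'⟩

/-- Differentiable QR decomposition `A = Q R` with `Qᵀ Q = I`, `R` upper-triangular and
invertible. At a point `t₀` where `R t₀ = I`, the derivative satisfies
`R' = Qᵀ A' − Qᵀ Q'`, with `Qᵀ Q'` skew-symmetric and `R'` upper triangular; hence
`(R')ᵢᵢ = (Qᵀ A')ᵢᵢ` and for `i < j`, `(R')ᵢⱼ = (Qᵀ A')ᵢⱼ + (Qᵀ A')ⱼᵢ`. -/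
theorem stmt1 (n m : ℕ) (A A' Q Q' : ℝ → Matrix (Fin n) (Fin m) ℝ)
    (R R' : ℝ → Matrix (Fin m) (Fin m) ℝ)
    (hA : ∀ i j t, HasDerivAt (fun s => A s i j) (A' t i j) t)
    (hQ : ∀ i j t, HasDerivAt (fun s => Q s i j) (Q' t i j) t)
    (hR : ∀ i j t, HasDerivAt (fun s => R s i j) (R' t i j) t)
    (hQR : ∀ t, A t = Q t * R t)
    (horth : ∀ t, (Q t)ᵀ * Q t = 1)
    (hupper : ∀ t i j, j < i → R t i j = 0)
    (hinv : ∀ t, IsUnit (R t).det)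
    (t₀ : ℝ) (hR0 : R t₀ = 1) :
    R' t₀ = (Q t₀)ᵀ * A' t₀ - (Q t₀)ᵀ * Q' t₀ ∧
    ((Q t₀)ᵀ * Q' t₀)ᵀ = -((Q t₀)ᵀ * Q' t₀) ∧
    (∀ i j : Fin m, j < i → R' t₀ i j = 0) ∧
    (∀ i : Fin m, R' t₀ i i = ((Q t₀)ᵀ * A' t₀) i i) ∧
    (∀ i j : Fin m, i < j →
      R' t₀ i j = ((Q t₀)ᵀ * A' t₀) i j + ((Q t₀)ᵀ * A' t₀) j i) :=
  stmt1_general n m A A' Q Q' R R' hA hQ hR hQR horth hupper t₀ hR0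
end

section
/- Let v_k satisfy the regularized tangent recursion v_{k+1} = A_k v_k + χ_{k+1} − Σᵢ c_{k+1}ⁱ q_{k+1}ⁱ with c_{k+1}ⁱ = q_{k+1}ⁱ · (A_k v_k + χ_{k+1}) and q_{k+1}¹,…,q_{k+1}ᵐ orthonormal. If ‖(I − Q_{k+1} Q_{k+1}ᵀ) A_k x‖ ≤ λ‖x‖ for all x orthogonal to range(Q_k), with λ ∈ (0,1), and ‖χ_k‖ ≤ c for all k, and v_0 = 0, then v_k · q_kⁱ = 0 for all k ≥ 1, i, and ‖v_k‖ ≤ c/(1 − λ) for all k. -/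
/-!
The recursion says `v_{k+1} = (I − Q_{k+1}Q_{k+1}ᵀ)(A_k v_k + χ_{k+1})`, so `v_{k+1}` lies in the
orthogonal complement of the span of the `q_{k+1}ⁱ`. Hence the contraction hypothesis applies to
`v_k` at every step, and since `I − QQᵀ` is linear and does not increase norms,
`‖v_{k+1}‖ ≤ λ‖v_k‖ + c`. From `v_0 = 0` this affine recursion never exceeds its fixed point
`c/(1 − λ)`.
-/

open scoped RealInnerProductSpace

theorem le_div_one_sub_of_le_mul_add {u : ℕ → ℝ} {lam c : ℝ} (hlam0 : 0 ≤ lam) (hlam1 : lam < 1)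
    (h0 : u 0 ≤ c / (1 - lam)) (hstep : ∀ k, u (k + 1) ≤ lam * u k + c) :
    ∀ k, u k ≤ c / (1 - lam) := by
  have hfix : lam * (c / (1 - lam)) + c = c / (1 - lam) := by
    field_simp [(sub_pos.mpr hlam1).ne']
    ring
  intro k
  induction k with
  | zero => exact h0
  | succ k ih =>
    calc u (k + 1) ≤ lam * u k + c := hstep k
      _ ≤ lam * (c / (1 - lam)) + c := by gcongr
      _ = c / (1 - lam) := hfix

section OrthResidual

variable {E : Type*} [NormedAddCommGroup E] [InnerProductSpace ℝ E] {ι : Type*} [Fintype ι]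

/-- With `q` the columns of `Q`, `orthResidual q x` is `(I − QQᵀ) x`. -/
def orthResidual (q : ι → E) (x : E) : E :=
  x - ∑ i, ⟪q i, x⟫ • q i

theorem orthResidual_add (q : ι → E) (x y : E) :
    orthResidual q (x + y) = orthResidual q x + orthResidual q y := by
  simp only [orthResidual, inner_add_right, add_smul, Finset.sum_add_distrib]
  abel

theorem Orthonormal.inner_orthResidual {q : ι → E} (hq : Orthonormal ℝ q) (x : E) (i : ι) :
    ⟪q i, orthResidual q x⟫ = 0 := by
  rw [orthResidual, inner_sub_right, hq.inner_right_fintype, sub_self]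

theorem Orthonormal.norm_orthResidual_le {q : ι → E} (hq : Orthonormal ℝ q) (x : E) :
    ‖orthResidual q x‖ ≤ ‖x‖ := by
  set p := ∑ i, ⟪q i, x⟫ • q i
  have hperp : ⟪orthResidual q x, p⟫ = 0 := by
    refine (inner_sum _ _ _).trans (Finset.sum_eq_zero fun i _ => ?_)
    rw [inner_smul_right, real_inner_comm (q i), hq.inner_orthResidual, mul_zero]
  have hpyth : ‖x‖ * ‖x‖ = ‖orthResidual q x‖ * ‖orthResidual q x‖ + ‖p‖ * ‖p‖ := by
    rw [← norm_add_sq_eq_norm_sq_add_norm_sq_real hperp, orthResidual, sub_add_cancel]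
  exact mul_self_le_mul_self_iff (norm_nonneg _) (norm_nonneg _) |>.mpr
    (hpyth ▸ le_add_of_nonneg_right (mul_self_nonneg _))

section Recursion

variable {T : ℕ → E →ₗ[ℝ] E} {q : ℕ → ι → E} {χ v : ℕ → E}

theorem inner_eq_zero_of_eq_orthResidual (hq : ∀ k, Orthonormal ℝ (q k))
    (hrec : ∀ k, v (k + 1) = orthResidual (q (k + 1)) (T k (v k) + χ (k + 1))) (h0 : v 0 = 0) :
    ∀ k i, ⟪q k i, v k⟫ = 0
  | 0, i => by rw [h0, inner_zero_right]
  | k + 1, i => by rw [hrec k, (hq (k + 1)).inner_orthResidual]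

theorem norm_le_div_one_sub_of_eq_orthResidual {lam c : ℝ} (hq : ∀ k, Orthonormal ℝ (q k))
    (hrec : ∀ k, v (k + 1) = orthResidual (q (k + 1)) (T k (v k) + χ (k + 1))) (h0 : v 0 = 0)
    (hlam0 : 0 ≤ lam) (hlam1 : lam < 1)
    (hcontr : ∀ k x, (∀ i, ⟪q k i, x⟫ = 0) → ‖orthResidual (q (k + 1)) (T k x)‖ ≤ lam * ‖x‖)
    (hχ : ∀ k, ‖χ k‖ ≤ c) :
    ∀ k, ‖v k‖ ≤ c / (1 - lam) := by
  have hc : 0 ≤ c := (norm_nonneg _).trans (hχ 0)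
  refine le_div_one_sub_of_le_mul_add hlam0 hlam1 ?_ fun k => ?_
  · rw [h0, norm_zero]
    exact div_nonneg hc (sub_nonneg.mpr hlam1.le)
  · calc ‖v (k + 1)‖
        ≤ ‖orthResidual (q (k + 1)) (T k (v k))‖ + ‖orthResidual (q (k + 1)) (χ (k + 1))‖ := by
          rw [hrec k, orthResidual_add]
          exact norm_add_le _ _
      _ ≤ lam * ‖v k‖ + c := by
          gcongr
          · exact hcontr k (v k) (inner_eq_zero_of_eq_orthResidual hq hrec h0 k)
          · exact ((hq (k + 1)).norm_orthResidual_le _).trans (hχ (k + 1))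

end Recursion

end OrthResidual

/-- Regularized tangent recursion: with `v_{k+1} = A_k v_k + χ_{k+1} − Σᵢ c_{k+1}ⁱ q_{k+1}ⁱ`,
`c_{k+1}ⁱ = q_{k+1}ⁱ ⬝ (A_k v_k + χ_{k+1})`, orthonormal `q_k`, a uniform contraction
of the projected dynamics on the orthogonal complement of the unstable subspace
(`λ ∈ (0,1)`), `‖χ_k‖ ≤ c`, and `v_0 = 0`: then `v_k ⊥ q_kⁱ` for all `k ≥ 1`, `i`, and
`‖v_k‖ ≤ c/(1 − λ)` for all `k`. -/
theorem stmt18 (n m : ℕ)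
    (A : ℕ → Matrix (Fin n) (Fin n) ℝ)
    (q : ℕ → Fin m → EuclideanSpace ℝ (Fin n))
    (χ v : ℕ → EuclideanSpace ℝ (Fin n))
    (cc : ℕ → Fin m → ℝ) (lam c : ℝ)
    (horth : ∀ k, ∀ i j : Fin m, ⟪q k i, q k j⟫ = if i = j then (1 : ℝ) else 0)
    (hc : ∀ k i, cc (k + 1) i = ⟪q (k + 1) i, Matrix.toEuclideanLin (A k) (v k) + χ (k + 1)⟫)
    (hrec : ∀ k, v (k + 1) =
      Matrix.toEuclideanLin (A k) (v k) + χ (k + 1) - ∑ i, cc (k + 1) i • q (k + 1) i)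
    (hlam : lam ∈ Set.Ioo (0 : ℝ) 1)
    (hcontr : ∀ k (x : EuclideanSpace ℝ (Fin n)), (∀ i, ⟪q k i, x⟫ = 0) →
      ‖Matrix.toEuclideanLin (A k) x -
        ∑ i, ⟪q (k + 1) i, Matrix.toEuclideanLin (A k) x⟫ • q (k + 1) i‖ ≤ lam * ‖x‖)
    (hχ : ∀ k, ‖χ k‖ ≤ c)
    (h0 : v 0 = 0) :
    (∀ k, 1 ≤ k → ∀ i, ⟪v k, q k i⟫ = 0) ∧ (∀ k, ‖v k‖ ≤ c / (1 - lam)) := by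
  have hq : ∀ k, Orthonormal ℝ (q k) := fun k => orthonormal_iff_ite.mpr (horth k)
  have hres : ∀ k, v (k + 1) =
      orthResidual (q (k + 1)) (Matrix.toEuclideanLin (A k) (v k) + χ (k + 1)) := by
    intro k
    simp only [hrec k, hc k, orthResidual]
  refine ⟨fun k _ i => ?_, norm_le_div_one_sub_of_eq_orthResidual hq hres h0 hlam.1.le hlam.2
    hcontr hχ⟩
  rw [real_inner_comm]
  exact inner_eq_zero_of_eq_orthResidual hq hres h0 k i
end
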